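/- (Theorem 6, relaxation) Let C be an initial configuration of the BRP, let σ be a feasible move sequence for C containing U relocations in total, and let L ≤ U. Let C_L be the configuration reached after performing the moves of σ up to but not including the (L+1)-st relocation (i.e., the first L relocations together with all retrievals occurring before the (L+1)-st relocation; if L = U, all moves of σ). Then L plus the number of direct blockages of C_L is at most U. Consequently, the minimum over all length-L relocation prefixes of feasible behaviour of (L + number of resulting direct blockages) is a lower bound on the minimum number of relocations f(Fin B) whenever L ≤ f(Fin B). -/
import Mathlib


/-- A configuration of the BRP: each stack holds a list of blocks, bottom to top. -/
abbrev Config (B S : ℕ) := Fin S → List (Fin B)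

/-- Every block occurs exactly once among the stacks. -/
def IsConfig {B S : ℕ} (C : Config B S) : Prop :=
  ∀ b : Fin B, (∑ s : Fin S, (C s).count b) = 1

/-- `a` lies strictly below `b` in stack `s` of `C`. -/
def StrictlyBelow {B S : ℕ} (C : Config B S) (s : Fin S) (a b : Fin B) : Prop :=
  ∃ i j : ℕ, i < j ∧ (C s)[i]? = some a ∧ (C s)[j]? = some b

/-- A block is badly placed if some smaller-labelled block lies below it in its stack. -/
def BadlyPlaced {B S : ℕ} (C : Config B S) (b : Fin B) : Prop :=
  ∃ s a, a < b ∧ StrictlyBelow C s a b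

/-- Moves: retrieve the top block of a stack, or relocate the top block of one
stack onto another stack. -/
inductive Move (S : ℕ) where
  | retrieve (s : Fin S)
  | relocate (src dst : Fin S)

def applyMove {B S : ℕ} (C : Config B S) : Move S → Config B S
  | .retrieve s => Function.update C s (C s).dropLast
  | .relocate src dst =>
    match (C src).getLast? with
    | some b =>
      let C' := Function.update C src (C src).dropLast
      Function.update C' dst (C' dst ++ [b])
    | none => C

def Enabled {B S : ℕ} (C : Config B S) : Move S → Prop
  | .retrieve s => ∃ b, (C s).getLast? = some b ∧ ∀ (s' : Fin S), ∀ b' ∈ C s', b ≤ b'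
  | .relocate src dst => src ≠ dst ∧ C src ≠ []

def play {B S : ℕ} (C : Config B S) : List (Move S) → Config B S
  | [] => C
  | m :: ms => play (applyMove C m) ms

def AllEnabled {B S : ℕ} (C : Config B S) : List (Move S) → Prop
  | [] => True
  | m :: ms => Enabled C m ∧ AllEnabled (applyMove C m) ms

/-- A feasible move sequence: every move is enabled and at the end all blocks
have been retrieved. -/
def Feasible {B S : ℕ} (C : Config B S) (ms : List (Move S)) : Prop :=
  AllEnabled C ms ∧ ∀ s, play C ms s = []

/-- `b` is the block moved by `m` (a relocation) performed in configuration `C`. -/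
def MovedBlock {B S : ℕ} (C : Config B S) (m : Move S) (b : Fin B) : Prop :=
  ∃ src dst, m = .relocate src dst ∧ src ≠ dst ∧ (C src).getLast? = some b

/-- The four types of relocation moves. -/
inductive MType where
  | BB | BG | GB | GG

/-- The relocation `m`, moving block `b` from configuration `C`, has the given type. -/
def MTypeOf {B S : ℕ} (C : Config B S) (m : Move S) (b : Fin B) : MType → Prop
  | .BB => BadlyPlaced C b ∧ BadlyPlaced (applyMove C m) b
  | .BG => BadlyPlaced C b ∧ ¬ BadlyPlaced (applyMove C m) b
  | .GB => ¬ BadlyPlaced C b ∧ BadlyPlaced (applyMove C m) b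
  | .GG => ¬ BadlyPlaced C b ∧ ¬ BadlyPlaced (applyMove C m) b

/-- `m` is a relocation of a block of `𝔅`. -/
def RelocIn {B S : ℕ} (𝔅 : Set (Fin B)) (C : Config B S) (m : Move S) : Prop :=
  ∃ b ∈ 𝔅, MovedBlock C m b

/-- `m` is a relocation of a block of `𝔅` of type `mt`. -/
def RelocTypeIn {B S : ℕ} (mt : MType) (𝔅 : Set (Fin B)) (C : Config B S) (m : Move S) : Prop :=
  ∃ b ∈ 𝔅, MovedBlock C m b ∧ MTypeOf C m b mt

/-- `m` is a non-BG relocation of a block of `𝔅`. -/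
def RelocNonBGIn {B S : ℕ} (𝔅 : Set (Fin B)) (C : Config B S) (m : Move S) : Prop :=
  ∃ b ∈ 𝔅, MovedBlock C m b ∧ ¬ MTypeOf C m b MType.BG

/-- Count the moves of a sequence satisfying `P` (evaluated in the configuration
in which each move is performed). -/
noncomputable def countMoves {B S : ℕ} (P : Config B S → Move S → Prop) :
    Config B S → List (Move S) → ℕ
  | _, [] => 0
  | C, m :: ms =>
    (@ite ℕ (P C m) (Classical.propDecidable _) 1 0) + countMoves P (applyMove C m) ms

/-- Minimum over feasible move sequences of the number of moves satisfying `P`. -/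
noncomputable def fMin {B S : ℕ} (C : Config B S) (P : Config B S → Move S → Prop) : ℕ :=
  sInf { n | ∃ ms, Feasible C ms ∧ countMoves P C ms = n }

/-- `f(𝔅)`: least number of relocations applied to blocks of `𝔅`. -/
noncomputable def fRel {B S : ℕ} (C : Config B S) (𝔅 : Set (Fin B)) : ℕ :=
  fMin C (RelocIn 𝔅)

/-- `f_mt(𝔅)`: least number of type-`mt` relocations applied to blocks of `𝔅`. -/
noncomputable def fTyp {B S : ℕ} (C : Config B S) (mt : MType) (𝔅 : Set (Fin B)) : ℕ :=
  fMin C (RelocTypeIn mt 𝔅)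

/-- `f_nonBG(𝔅)`: least number of non-BG relocations applied to blocks of `𝔅`. -/
noncomputable def fNonBG {B S : ℕ} (C : Config B S) (𝔅 : Set (Fin B)) : ℕ :=
  fMin C (RelocNonBGIn 𝔅)

/-- The top 1st layer: the topmost block of each stack. -/
def TopLayer {B S : ℕ} (C : Config B S) : Set (Fin B) :=
  {b | ∃ s, (C s).getLast? = some b}

/-- The top `k` layers: the topmost `k` blocks of every stack. -/
def TopK {B S : ℕ} (C : Config B S) (k : ℕ) : Set (Fin B) :=
  {b | ∃ s, b ∈ (C s).drop ((C s).length - k)}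

/-- The top `j`-th layer: the `j`-th block from the top of every stack. -/
def TopJth {B S : ℕ} (C : Config B S) (j : ℕ) : Set (Fin B) :=
  {b | ∃ s, (C s)[(C s).length - j]? = some b}

/-- A virtual layer: a set of blocks containing exactly one block from each stack. -/
def VirtualLayer {B S : ℕ} (C : Config B S) (V : Set (Fin B)) : Prop :=
  ∀ s : Fin S, ∃! b : Fin B, b ∈ V ∧ b ∈ C s

/-- `a` lies at or below the `V`-block of stack `s`. -/
def AtOrBelowLayer {B S : ℕ} (C : Config B S) (V : Set (Fin B)) (s : Fin S) (a : Fin B) : Prop :=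
  ∃ b j, b ∈ V ∧ (C s)[j]? = some b ∧ a ∈ (C s).take (j + 1)

/-- `V` is a virtual layer satisfying the conditions of Property 5:
(1) in some stack, a block strictly below the `V`-block of that stack has a smaller
label than every block of `V`; (2) every badly placed block of `V` has a label
strictly greater than the minimum label present in stack `s` after deleting all
blocks strictly above the `V`-block of `s`, for every stack `s`. -/
def P5 {B S : ℕ} (C : Config B S) (V : Set (Fin B)) : Prop :=
  VirtualLayer C V ∧
  (∃ s a b, b ∈ V ∧ StrictlyBelow C s a b ∧ ∀ c ∈ V, a < c) ∧
  (∀ b ∈ V, BadlyPlaced C b → ∀ s : Fin S, ∃ a, AtOrBelowLayer C V s a ∧ a < b)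

/-- A pair of virtual layers `V₁` (upper), `V₂` (lower) with shared well-placed
block `bstar` satisfying the conditions of Property 7. -/
def P7 {B S : ℕ} (C : Config B S) (V₁ V₂ : Set (Fin B)) (bstar : Fin B) : Prop :=
  V₁ ∩ V₂ = {bstar} ∧
  ¬ BadlyPlaced C bstar ∧
  (∀ s : Fin S, bstar ∉ C s →
    ∃ b₁ b₂, b₁ ∈ V₁ ∧ b₂ ∈ V₂ ∧ StrictlyBelow C s b₂ b₁) ∧
  P5 C V₁ ∧ P5 C V₂ ∧
  (∀ s : Fin S, ∃ a, AtOrBelowLayer C V₁ s a ∧ a ≤ bstar) ∧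
  (∃ s : Fin S, ∀ a, AtOrBelowLayer C V₁ s a → bstar ≤ a)

/-- Push blocks one by one onto the indicated stacks. -/
def pushAll {B S : ℕ} (C : Config B S) : List (Fin B × Fin S) → Config B S
  | [] => C
  | p :: rest => pushAll (Function.update C p.2 (C p.2 ++ [p.1])) rest

/-- The blocks lying strictly above position `i` of stack `s`, listed from the
top of the stack downward (the processing order of the experiment). -/
def aboveList {B S : ℕ} (C : Config B S) (s : Fin S) (i : ℕ) : List (Fin B) :=
  ((C s).drop (i + 1)).reverse

/-- The arrangement resulting from the experiment of Property 4: the blocks above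
position `i` of stack `s` are relocated exactly once, from the top downward, onto
the stacks listed in `ds`. -/
def expResult {B S : ℕ} (C : Config B S) (s : Fin S) (i : ℕ) (ds : List (Fin S)) :
    Config B S :=
  pushAll (Function.update C s ((C s).take (i + 1))) ((aboveList C s i).zip ds)

/-- The condition of Property 4 (target block at position `i` of stack `sStar`):
in every experiment, some relocated block ends badly placed. -/
def P4Cond {B S : ℕ} (C : Config B S) (sStar : Fin S) (i : ℕ) : Prop :=
  ∀ ds : List (Fin S), ds.length = (aboveList C sStar i).length →
    (∀ d ∈ ds, d ≠ sStar) →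
    ∃ b ∈ aboveList C sStar i, BadlyPlaced (expResult C sStar i ds) b

/-- The set `𝔅⁴`: the blocks above the target block together with, for each
nonempty stack other than the target's stack, its block of minimum label. -/
def B4Set {B S : ℕ} (C : Config B S) (sStar : Fin S) (i : ℕ) : Set (Fin B) :=
  {b | b ∈ aboveList C sStar i} ∪
  {b | ∃ s, s ≠ sStar ∧ b ∈ C s ∧ ∀ b' ∈ C s, b ≤ b'}

/-- The number of direct blockages: adjacent pairs in a stack whose upper block
has a strictly larger label. -/
def directBlockages {B S : ℕ} (C : Config B S) : ℕ :=
  ∑ s : Fin S, (((C s).zip (C s).tail).filter (fun p => decide (p.1 < p.2))).length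

/-- The number of relocations in a move sequence. -/
def relocCount {S : ℕ} (ms : List (Move S)) : ℕ :=
  (ms.filter (fun m => match m with | Move.relocate _ _ => true | Move.retrieve _ => false)).length

/-- The minimum number of relocations over all feasible move sequences. -/
noncomputable def fAll {B S : ℕ} (C : Config B S) : ℕ :=
  sInf { n | ∃ ms, Feasible C ms ∧ relocCount ms = n }

/-- `g(L)`: `L` plus the minimum number of direct blockages over all partial
plans with exactly `L` relocations. -/
noncomputable def gIter {B S : ℕ} (C : Config B S) (L : ℕ) : ℕ :=
  L + sInf { d | ∃ ms : List (Move S), AllEnabled C ms ∧ relocCount ms = L ∧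
      d = directBlockages (play C ms) }

/-- Direct blockages of a single list. -/
def dbL {B : ℕ} (l : List (Fin B)) : ℕ :=
  ((l.zip l.tail).filter (fun p => decide (p.1 < p.2))).length

lemma directBlockages_eq {B S : ℕ} (C : Config B S) :
    directBlockages C = ∑ s : Fin S, dbL (C s) := rfl

lemma dbL_cons_cons {B : ℕ} (a c : Fin B) (r : List (Fin B)) :
    dbL (a :: c :: r) = (if a < c then 1 else 0) + dbL (c :: r) := by
  simp only [dbL, List.tail_cons, List.zip_cons_cons, List.filter_cons]
  by_cases h : a < c <;> simp [h] <;> omega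

lemma dbL_append {B : ℕ} (l : List (Fin B)) (x : Fin B) :
    dbL (l ++ [x]) = dbL l +
      (match l.getLast? with
       | some a => if a < x then 1 else 0
       | none => 0) := by
  induction l with
  | nil => simp [dbL]
  | cons a tl ih =>
    cases tl with
    | nil => simp [dbL]; split <;> simp_all
    | cons c tl' =>
      simp only [List.cons_append] at ih ⊢
      rw [dbL_cons_cons a c (tl' ++ [x]), dbL_cons_cons a c tl', ih,
        List.getLast?_cons_cons, Nat.add_assoc]

lemma dbL_dropLast_le {B : ℕ} (l : List (Fin B)) :
    dbL l ≤ dbL l.dropLast + 1 := by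
  rcases h : l.getLast? with _ | b
  · simp [List.getLast?_eq_none_iff.mp h, dbL]
  · have hl : l.dropLast ++ [b] = l := List.dropLast_append_getLast? b h
    conv_lhs => rw [← hl]
    rw [dbL_append]
    split
    · split <;> omega
    · omega

lemma dbL_dropLast_ge {B : ℕ} (l : List (Fin B)) (b : Fin B)
    (hb : l.getLast? = some b) (hmin : ∀ a ∈ l, b ≤ a) :
    dbL l ≤ dbL l.dropLast := by
  have hl : l.dropLast ++ [b] = l := List.dropLast_append_getLast? b hb
  conv_lhs => rw [← hl]
  rw [dbL_append]
  split
  case _ a h2 =>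
    have ha' : a ∈ l.dropLast := by
      obtain ⟨hne, rfl⟩ := List.mem_getLast?_eq_getLast (l := l.dropLast) (x := a)
        (by simp [h2])
      exact List.getLast_mem hne
    have ha : a ∈ l := List.dropLast_subset l ha'
    have : ¬ a < b := not_lt.mpr (hmin a ha)
    simp [this]
  case _ => omega

lemma dbL_le_append {B : ℕ} (l : List (Fin B)) (x : Fin B) :
    dbL l ≤ dbL (l ++ [x]) := by
  rw [dbL_append]; omega

lemma relocCount_cons_retrieve {S : ℕ} (s : Fin S) (ms : List (Move S)) :
    relocCount (Move.retrieve s :: ms) = relocCount ms := by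
  simp [relocCount]

lemma relocCount_cons_relocate {S : ℕ} (s d : Fin S) (ms : List (Move S)) :
    relocCount (Move.relocate s d :: ms) = relocCount ms + 1 := by
  simp [relocCount]

lemma relocCount_append {S : ℕ} (a b : List (Move S)) :
    relocCount (a ++ b) = relocCount a + relocCount b := by
  simp [relocCount]

lemma play_append {B S : ℕ} (a b : List (Move S)) (C : Config B S) :
    play C (a ++ b) = play (play C a) b := by
  induction a generalizing C with
  | nil => rfl
  | cons m t ih => simp [play, ih]

lemma allEnabled_append {B S : ℕ} (a b : List (Move S)) (C : Config B S) :
    AllEnabled C (a ++ b) ↔ AllEnabled C a ∧ AllEnabled (play C a) b := by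
  induction a generalizing C with
  | nil => simp [AllEnabled, play]
  | cons m t ih => simp [AllEnabled, play, ih]; tauto

/-- Key lemma: a feasible completion from configuration `C` needs at least
`directBlockages C` relocations. -/
lemma key_lemma {B S : ℕ} :
    ∀ (ms : List (Move S)) (C : Config B S), AllEnabled C ms →
      (∀ s, play C ms s = []) → directBlockages C ≤ relocCount ms := by
  intro ms
  induction ms with
  | nil =>
    intro C _ hend
    have h0 : ∀ s, C s = [] := hend
    have : ∀ s : Fin S, dbL (C s) = 0 := fun s => by simp [h0 s, dbL]
    simp [directBlockages_eq, relocCount, this]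
  | cons m t ih =>
    intro C hen hend
    obtain ⟨h1, h2⟩ := hen
    have hend' : ∀ s, play (applyMove C m) t s = [] := hend
    have IH := ih (applyMove C m) h2 hend'
    cases m with
    | retrieve s =>
      rw [relocCount_cons_retrieve]
      refine le_trans ?_ IH
      obtain ⟨b, hb, hmin⟩ := h1
      rw [directBlockages_eq, directBlockages_eq]
      apply Finset.sum_le_sum
      intro s' _
      by_cases hs : s' = s
      · subst hs
        simp only [applyMove, Function.update_self]
        exact dbL_dropLast_ge _ b hb (fun a ha => hmin s' a ha)
      · simp [applyMove, Function.update_of_ne hs]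
    | relocate src dst =>
      rw [relocCount_cons_relocate]
      obtain ⟨hne, hnil⟩ := h1
      obtain ⟨b, hb⟩ : ∃ b, (C src).getLast? = some b := by
        cases h : (C src).getLast? with
        | none => exact absurd (List.getLast?_eq_none_iff.mp h) hnil
        | some b => exact ⟨b, rfl⟩
      set R := applyMove C (Move.relocate src dst) with hR
      have hRdef : R = Function.update (Function.update C src (C src).dropLast) dst
          ((Function.update C src (C src).dropLast) dst ++ [b]) := by
        simp [hR, applyMove, hb]
      have hpt : ∀ s' : Fin S, dbL (C s') ≤ dbL (R s') + (if s' = src then 1 else 0) := by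
        intro s'
        by_cases hsrc : s' = src
        · subst hsrc
          have : R s' = (C s').dropLast := by
            rw [hRdef, Function.update_of_ne hne, Function.update_self]
          rw [this]; simp [dbL_dropLast_le]
        · by_cases hdst : s' = dst
          · subst hdst
            have : R s' = C s' ++ [b] := by
              rw [hRdef, Function.update_self, Function.update_of_ne (Ne.symm hne)]
            rw [this]; simp [hsrc, dbL_le_append]
          · have : R s' = C s' := by
              rw [hRdef, Function.update_of_ne hdst, Function.update_of_ne hsrc]
            rw [this]; simp [hsrc]
      calc directBlockages C = ∑ s', dbL (C s') := directBlockages_eq C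
        _ ≤ ∑ s' : Fin S, (dbL (R s') + (if s' = src then 1 else 0)) :=
            Finset.sum_le_sum (fun s' _ => hpt s')
        _ = (∑ s' : Fin S, dbL (R s')) + 1 := by
            rw [Finset.sum_add_distrib, Finset.sum_ite_eq' Finset.univ src (fun _ => 1)]
            simp
        _ = directBlockages R + 1 := by rw [directBlockages_eq]
        _ ≤ relocCount t + 1 := by omega

/-- Splitting a move sequence just before its `(L+1)`-st relocation. -/
lemma split_lemma {S : ℕ} :
    ∀ (ms : List (Move S)) (L : ℕ), L ≤ relocCount ms →
      ∃ a b, ms = a ++ b ∧ relocCount a = L ∧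
        (b = [] ∨ ∃ s d r, b = Move.relocate s d :: r) := by
  intro ms
  induction ms with
  | nil =>
    intro L hL
    simp [relocCount] at hL
    exact ⟨[], [], by simp, by simp [relocCount, hL], Or.inl rfl⟩
  | cons m t ih =>
    intro L hL
    cases m with
    | retrieve s =>
      rw [relocCount_cons_retrieve] at hL
      obtain ⟨a, b, hab, ha, hb⟩ := ih L hL
      exact ⟨Move.retrieve s :: a, b, by simp [hab],
        by rw [relocCount_cons_retrieve, ha], hb⟩
    | relocate src dst =>
      cases L with
      | zero =>
        exact ⟨[], Move.relocate src dst :: t, rfl, by simp [relocCount],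
          Or.inr ⟨src, dst, t, rfl⟩⟩
      | succ L' =>
        rw [relocCount_cons_relocate] at hL
        obtain ⟨a, b, hab, ha, hb⟩ := ih L' (by omega)
        exact ⟨Move.relocate src dst :: a, b, by simp [hab],
          by rw [relocCount_cons_relocate, ha], hb⟩

/-- Theorem 6, relaxation: if `σ = ms₁ ++ ms₂` is a feasible move
sequence with `U` relocations, `ms₁` contains exactly `L` relocations and `ms₂`
either is empty or starts with a relocation (so `ms₁` consists of the moves of
`σ` up to but not including the `(L+1)`-st relocation), then `L` plus the number
of direct blockages of the configuration reached after `ms₁` is at most `U`.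
Consequently, if `L ≤ f(Fin B)`, the minimum over all partial plans with `L`
relocations of `L` plus the number of resulting direct blockages is a lower
bound on `f(Fin B)`. -/
theorem brp_relaxation {B S : ℕ} (hS : 2 ≤ S) (hB : 1 ≤ B)
    (C : Config B S) (hC : IsConfig C)
    (ms₁ ms₂ : List (Move S)) (hfeas : Feasible C (ms₁ ++ ms₂))
    (U L : ℕ) (hU : relocCount (ms₁ ++ ms₂) = U) (hL : relocCount ms₁ = L)
    (hcut : ms₂ = [] ∨ ∃ src dst rest, ms₂ = Move.relocate src dst :: rest) :
    L + directBlockages (play C ms₁) ≤ U ∧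
    (L ≤ fAll C →
      sInf { v | ∃ ms : List (Move S), AllEnabled C ms ∧ relocCount ms = L ∧
          v = L + directBlockages (play C ms) } ≤ fAll C) := by
  obtain ⟨hen, hend⟩ := hfeas
  have hsplitbound : ∀ (a b : List (Move S)), AllEnabled C (a ++ b) →
      (∀ s, play C (a ++ b) s = []) →
      relocCount a + directBlockages (play C a) ≤ relocCount (a ++ b) := by
    intro a b hena hendab
    rw [allEnabled_append] at hena
    have hkey := key_lemma b (play C a) hena.2 (by
      intro s; rw [← play_append]; exact hendab s)
    rw [relocCount_append]
    omega
  constructor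
  · rw [← hU, ← hL]
    exact hsplitbound ms₁ ms₂ hen hend
  · intro hLf
    have hTne : {n | ∃ ms, Feasible C ms ∧ relocCount ms = n}.Nonempty :=
      ⟨U, ms₁ ++ ms₂, ⟨hen, hend⟩, hU⟩
    have hmem := Nat.sInf_mem hTne
    obtain ⟨ms, hF, hrc⟩ := hmem
    have hLle : L ≤ relocCount ms := by
      rw [hrc]; exact hLf
    obtain ⟨a, b, hab, ha, _⟩ := split_lemma ms L hLle
    obtain ⟨henms, hendms⟩ := hF
    rw [hab] at henms hendms
    have hbound := hsplitbound a b henms hendms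
    have hena : AllEnabled C a := ((allEnabled_append a b C).mp henms).1
    have hv : L + directBlockages (play C a) ∈
        { v | ∃ ms : List (Move S), AllEnabled C ms ∧ relocCount ms = L ∧
          v = L + directBlockages (play C ms) } := ⟨a, hena, ha, rfl⟩
    refine le_trans (Nat.sInf_le hv) ?_
    rw [← hab] at hbound
    have hfa : fAll C = sInf {n | ∃ ms, Feasible C ms ∧ relocCount ms = n} := rfl
    rw [hfa]
    rw [hrc] at hbound
    omega
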